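/- For every monotone f : 𝕀 → 𝕀 the relations (f^∨)^∧ = f^∧ and (f^∧)^∨ = f^∨ hold; consequently the operations g ↦ g^∨ from ℒ∧(𝕀) to ℒ∨(𝕀) and f ↦ f^∧ from ℒ∨(𝕀) to ℒ∧(𝕀) are mutually inverse order-preserving bijections. -/
import Mathlib


noncomputable section

instance : Fact ((0:ℝ) ≤ 1) := ⟨zero_le_one⟩

/-- `𝕀` is the real unit interval `[0,1]`, a complete lattice. -/
notation "𝕀" => unitInterval

/-- `f^∧(x) = ⨅_{x < x'} f x'`, the meet-continuous closure data of `f`. -/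
def mCl (f : 𝕀 → 𝕀) : 𝕀 → 𝕀 :=
  fun x => ⨅ y : {y : 𝕀 // x < y}, f y.1

/-- `f^∨(x) = ⨆_{x' < x} f x'`, the join-continuous closure data of `f`. -/
def jCl (f : 𝕀 → 𝕀) : 𝕀 → 𝕀 :=
  fun x => ⨆ y : {y : 𝕀 // y.1 < x}, f y.1

/-- `f` is join-continuous: it preserves all suprema. -/
def JoinCont (f : 𝕀 → 𝕀) : Prop :=
  ∀ S : Set 𝕀, f (sSup S) = ⨆ x ∈ S, f x

/-- `f` is meet-continuous: it preserves all infima. -/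
def MeetCont (f : 𝕀 → 𝕀) : Prop :=
  ∀ S : Set 𝕀, f (sInf S) = ⨅ x ∈ S, f x

/-- The right adjoint `f^ρ` of a join-continuous `f`. -/
def radj (f : 𝕀 → 𝕀) : 𝕀 → 𝕀 := fun y => sSup {x | f x ≤ y}

/-- The left adjoint `g^λ` of a meet-continuous `g`. -/
def ladj (g : 𝕀 → 𝕀) : 𝕀 → 𝕀 := fun y => sInf {x | y ≤ g x}

/-- `f* := (f^ρ)^∨`. -/
def starF (f : 𝕀 → 𝕀) : 𝕀 → 𝕀 := jCl (radj f)

/-- `f ⊗ g := g ∘ f`. -/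
def otimes (f g : 𝕀 → 𝕀) : 𝕀 → 𝕀 := g ∘ f

/-- `f ⊕ g := (g^∧ ∘ f^∧)^∨`. -/
def oplus (f g : 𝕀 → 𝕀) : 𝕀 → 𝕀 := jCl (mCl g ∘ mCl f)

/-- A tuple is closed if `f_{i,j} ⊗ f_{j,k} ≤ f_{i,k}` for `i < j < k`. -/
def ClosedT (d : ℕ) (f : Fin d → Fin d → (𝕀 → 𝕀)) : Prop :=
  ∀ i j k : Fin d, i < j → j < k → ∀ x, otimes (f i j) (f j k) x ≤ f i k x

/-- A tuple is open if `f_{i,k} ≤ f_{i,j} ⊕ f_{j,k}` for `i < j < k`. -/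
def OpenT (d : ℕ) (f : Fin d → Fin d → (𝕀 → 𝕀)) : Prop :=
  ∀ i j k : Fin d, i < j → j < k → ∀ x, f i k x ≤ oplus (f i j) (f j k) x

/-- Pointwise order on the meaningful (`i < j`) entries of tuples. -/
def TLE (d : ℕ) (f g : Fin d → Fin d → (𝕀 → 𝕀)) : Prop :=
  ∀ i j : Fin d, i < j → ∀ x, f i j x ≤ g i j x

/-- Each meaningful entry of the tuple is join-continuous. -/
def TupleJC (d : ℕ) (f : Fin d → Fin d → (𝕀 → 𝕀)) : Prop :=
  ∀ i j : Fin d, i < j → JoinCont (f i j)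

/-- `⊕`-value of a subdivision `ℓ₀ < ℓ₁ < … < ℓ_k`:
`f_{ℓ₀,ℓ₁} ⊕ f_{ℓ₁,ℓ₂} ⊕ … ⊕ f_{ℓ_{k-1},ℓ_k}`. -/
def oplusChain {d : ℕ} (f : Fin d → Fin d → (𝕀 → 𝕀)) : List (Fin d) → (𝕀 → 𝕀)
  | [] => id
  | [_] => id
  | a :: b :: l => oplus (f a b) (oplusChain f (b :: l))

/-- Subdivisions of the interval `[i,j]`: strictly increasing lists from `i` to `j`. -/
def Subdiv (d : ℕ) (i j : Fin d) : Set (List (Fin d)) :=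
  {L | L.Chain' (· < ·) ∧ L.head? = some i ∧ L.getLast? = some j}

/-- The interior of a tuple: `interior(f)_{i,j}` is the infimum, over all subdivisions
`i = ℓ₀ < ℓ₁ < … < ℓ_k = j`, of `f_{ℓ₀,ℓ₁} ⊕ … ⊕ f_{ℓ_{k-1},ℓ_k}`. -/
def interiorT (d : ℕ) (f : Fin d → Fin d → (𝕀 → 𝕀)) : Fin d → Fin d → (𝕀 → 𝕀) :=
  fun i j => ⨅ L : Subdiv d i j, oplusChain f L.1

/-- The chain `C_f ⊆ 𝕀²` associated to a monotone `f : 𝕀 → 𝕀`. -/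
def Cf2 (f : 𝕀 → 𝕀) : Set (𝕀 × 𝕀) :=
  {p | jCl f p.1 ≤ p.2 ∧ p.2 ≤ mCl f p.1}

/-- `f_C^-(x) = ⨅ {y | (x,y) ∈ C}`. -/
def fCm (C : Set (𝕀 × 𝕀)) : 𝕀 → 𝕀 := fun x => sInf {y | (x, y) ∈ C}

/-- `f_C^+(x) = ⨆ {y | (x,y) ∈ C}`. -/
def fCp (C : Set (𝕀 × 𝕀)) : 𝕀 → 𝕀 := fun x => sSup {y | (x, y) ∈ C}

/-- Compatibility of a (fully extended) tuple: `f_{j,k} ∘ f_{i,j} ≤ f_{i,k}` for all `i,j,k`. -/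
def Compatible (d : ℕ) (f : Fin d → Fin d → (𝕀 → 𝕀)) : Prop :=
  ∀ i j k : Fin d, ∀ x, f j k (f i j x) ≤ f i k x

/-- The subset `C_f ⊆ 𝕀^d` associated to a compatible tuple. -/
def Cfd (d : ℕ) (f : Fin d → Fin d → (𝕀 → 𝕀)) : Set (Fin d → 𝕀) :=
  {x | ∀ i j : Fin d, f i j (x i) ≤ x j}

/-- `v(C)_{i,j}(x) = ⨅ {c_j | c ∈ C, c_i = x}`. -/
def vC (d : ℕ) (C : Set (Fin d → 𝕀)) (i j : Fin d) : 𝕀 → 𝕀 :=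
  fun x => sInf {z | ∃ c ∈ C, c i = x ∧ c j = z}

/-- Canonical extension of a tuple given on `i < j` to all pairs:
identity on the diagonal and `f_{j,i} := (f_{i,j})*` below it. -/
def extT (d : ℕ) (g : Fin d → Fin d → (𝕀 → 𝕀)) : Fin d → Fin d → (𝕀 → 𝕀) :=
  fun i j => if i < j then g i j else if j < i then starF (g j i) else id

/-- The one-step function `h_{x,y}`. -/
def oneStep (x y : 𝕀) : 𝕀 → 𝕀 := fun t => if t ≤ x then 0 else y



private lemma jCl_mono (f : 𝕀 → 𝕀) : Monotone (jCl f) := by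
  intro x x' h
  exact iSup_le fun y => le_iSup (fun z : {z : 𝕀 // z.1 < x'} => f z.1) ⟨y.1, lt_of_lt_of_le y.2 h⟩

private lemma mCl_mono (f : 𝕀 → 𝕀) : Monotone (mCl f) := by
  intro x x' h
  exact le_iInf fun y => iInf_le (fun z : {z : 𝕀 // x < z} => f z.1) ⟨y.1, lt_of_le_of_lt h y.2⟩

private lemma jCl_le_self {f : 𝕀 → 𝕀} (hf : Monotone f) (x : 𝕀) : jCl f x ≤ f x :=
  iSup_le fun y => hf y.2.le

private lemma self_le_mCl {f : 𝕀 → 𝕀} (hf : Monotone f) (x : 𝕀) : f x ≤ mCl f x :=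
  le_iInf fun y => hf y.2.le

private lemma mCl_jCl_eq {f : 𝕀 → 𝕀} (hf : Monotone f) : mCl (jCl f) = mCl f := by
  funext x
  apply le_antisymm
  · exact le_iInf fun y =>
      le_trans (iInf_le (fun z : {z : 𝕀 // x < z} => jCl f z.1) y) (jCl_le_self hf y.1)
  · refine le_iInf fun y => ?_
    obtain ⟨z, hxz, hzy⟩ := exists_between y.2
    exact le_trans (iInf_le (fun w : {w : 𝕀 // x < w} => f w.1) ⟨z, hxz⟩)
      (le_iSup (fun w : {w : 𝕀 // w.1 < y.1} => f w.1) ⟨z, hzy⟩)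

private lemma jCl_mCl_eq {f : 𝕀 → 𝕀} (hf : Monotone f) : jCl (mCl f) = jCl f := by
  funext x
  apply le_antisymm
  · refine iSup_le fun y => ?_
    obtain ⟨z, hyz, hzx⟩ := exists_between (show y.1 < x from y.2)
    exact le_trans (iInf_le (fun w : {w : 𝕀 // y.1 < w} => f w.1) ⟨z, hyz⟩)
      (le_iSup (fun w : {w : 𝕀 // w.1 < x} => f w.1) ⟨z, hzx⟩)
  · exact iSup_le fun y =>
      le_trans (self_le_mCl hf y.1) (le_iSup (fun z : {z : 𝕀 // z.1 < x} => mCl f z.1) y)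

private lemma jCl_joinCont {f : 𝕀 → 𝕀} (_hf : Monotone f) : JoinCont (jCl f) := by
  intro S
  apply le_antisymm
  · refine iSup_le fun y => ?_
    obtain ⟨x, hxS, hyx⟩ := lt_sSup_iff.mp (show y.1 < sSup S from y.2)
    refine le_trans ?_ (le_iSup₂ (f := fun x _ => jCl f x) x hxS)
    exact le_iSup (fun z : {z : 𝕀 // z.1 < x} => f z.1) ⟨y.1, hyx⟩
  · exact iSup₂_le fun x hx => jCl_mono f (le_sSup hx)

private lemma mCl_meetCont {f : 𝕀 → 𝕀} (_hf : Monotone f) : MeetCont (mCl f) := by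
  intro S
  apply le_antisymm
  · exact le_iInf₂ fun x hx => mCl_mono f (sInf_le hx)
  · refine le_iInf fun y => ?_
    obtain ⟨x, hxS, hxy⟩ := sInf_lt_iff.mp y.2
    refine le_trans (iInf₂_le (f := fun x _ => mCl f x) x hxS) ?_
    exact iInf_le (fun z : {z : 𝕀 // x < z} => f z.1) ⟨y.1, hxy⟩

private lemma monotone_of_meetCont {g : 𝕀 → 𝕀} (hg : MeetCont g) : Monotone g := by
  intro x y h
  have h1 : sInf ({x, y} : Set 𝕀) = x := by rw [sInf_pair]; exact inf_eq_left.mpr h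
  have h2 := hg {x, y}
  rw [h1] at h2
  exact h2.trans_le (iInf₂_le (f := fun (z : 𝕀) (_ : z ∈ ({x, y} : Set 𝕀)) => g z) y
    (Set.mem_insert_of_mem x rfl))

private lemma monotone_of_joinCont {f : 𝕀 → 𝕀} (hf : JoinCont f) : Monotone f := by
  intro x y h
  have h1 : sSup ({x, y} : Set 𝕀) = y := by rw [sSup_pair]; exact sup_eq_right.mpr h
  have h2 := hf {x, y}
  rw [h1] at h2
  exact h2.symm.le.trans' (le_iSup₂ (f := fun (z : 𝕀) (_ : z ∈ ({x, y} : Set 𝕀)) => f z) x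
    (Set.mem_insert x {y}))

private lemma mCl_eq_of_meetCont {g : 𝕀 → 𝕀} (hg : MeetCont g) : mCl g = g := by
  funext x
  have h1 : sInf (Set.Ioi x) = x := by
    apply le_antisymm
    · by_contra h
      obtain ⟨z, hxz, hzi⟩ := exists_between (not_le.mp h)
      exact absurd (sInf_le (show z ∈ Set.Ioi x from hxz)) (not_le.mpr hzi)
    · exact le_sInf fun z hz => hz.le
  have := hg (Set.Ioi x)
  rw [h1] at this
  rw [mCl, this, iInf_subtype']
  exact le_antisymm
    (le_iInf fun y => iInf_le (fun z : ↥(Set.Ioi x) => g z.1) ⟨y.1, y.2⟩)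
    (le_iInf fun y => iInf_le (fun z : {z : 𝕀 // x < z} => g z.1) ⟨y.1, y.2⟩)

private lemma jCl_eq_of_joinCont {f : 𝕀 → 𝕀} (hf : JoinCont f) : jCl f = f := by
  funext x
  have h1 : sSup (Set.Iio x) = x := by
    apply le_antisymm
    · exact sSup_le fun z hz => hz.le
    · by_contra h
      obtain ⟨z, hzi, hzx⟩ := exists_between (not_le.mp h)
      exact absurd (le_sSup (show z ∈ Set.Iio x from hzx)) (not_le.mpr hzi)
  have := hf (Set.Iio x)
  rw [h1] at this
  rw [jCl, this, iSup_subtype']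
  exact le_antisymm
    (iSup_le fun y => le_iSup (fun z : {z : 𝕀 // z.1 < x} => f z.1) ⟨y.1, y.2⟩)
    (iSup_le fun y => le_iSup (fun z : ↥(Set.Iio x) => f z.1) ⟨y.1, y.2⟩)

/-- `(f^∨)^∧ = f^∧` and `(f^∧)^∨ = f^∨` for monotone `f`; consequently
`g ↦ g^∨ : ℒ∧(𝕀) → ℒ∨(𝕀)` and `f ↦ f^∧ : ℒ∨(𝕀) → ℒ∧(𝕀)` are mutually inverse
order-preserving bijections. -/
theorem statement2 :
    (∀ f : 𝕀 → 𝕀, Monotone f → mCl (jCl f) = mCl f ∧ jCl (mCl f) = jCl f) ∧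
    (∀ g : 𝕀 → 𝕀, MeetCont g → JoinCont (jCl g) ∧ mCl (jCl g) = g) ∧
    (∀ f : 𝕀 → 𝕀, JoinCont f → MeetCont (mCl f) ∧ jCl (mCl f) = f) ∧
    (∀ g₁ g₂ : 𝕀 → 𝕀, MeetCont g₁ → MeetCont g₂ →
      (∀ x, g₁ x ≤ g₂ x) → ∀ x, jCl g₁ x ≤ jCl g₂ x) ∧
    (∀ f₁ f₂ : 𝕀 → 𝕀, JoinCont f₁ → JoinCont f₂ →
      (∀ x, f₁ x ≤ f₂ x) → ∀ x, mCl f₁ x ≤ mCl f₂ x) := by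
  refine ⟨fun f hf => ⟨mCl_jCl_eq hf, jCl_mCl_eq hf⟩, ?_, ?_, ?_, ?_⟩
  · intro g hg
    have hm := monotone_of_meetCont hg
    exact ⟨jCl_joinCont hm, by rw [mCl_jCl_eq hm, mCl_eq_of_meetCont hg]⟩
  · intro f hf
    have hm := monotone_of_joinCont hf
    exact ⟨mCl_meetCont hm, by rw [jCl_mCl_eq hm, jCl_eq_of_joinCont hf]⟩
  · intro g₁ g₂ _ _ h x
    exact iSup_le fun y =>
      le_trans (h y.1) (le_iSup (fun z : {z : 𝕀 // z.1 < x} => g₂ z.1) y)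
  · intro f₁ f₂ _ _ h x
    exact le_iInf fun y =>
      le_trans (iInf_le (fun z : {z : 𝕀 // x < z} => f₁ z.1) y) (h y.1)

end
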